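/- arXiv:0706.2899 — 8 statements merged into one kernel-verified Lean document; each statement's English description precedes it below -/
import Mathlib

section
/- Given real scalars β_0 and β with β > 0 and β − β_0 > 0, there exist scalars 0 < α_1 < α_2 < ... < α_n with α_1 α_2 ··· α_n = β such that all roots of the polynomial p(α) = (α+α_1)(α+α_2)···(α+α_n) − (β − β_0) are real. -/
open Polynomial Finset

set_option maxHeartbeats 2000000 in
theorem stmt_2 (n : ℕ) (hn : 1 ≤ n) (β₀ β : ℝ) (hβ : 0 < β) (hββ₀ : 0 < β - β₀) :
    ∃ α : Fin n → ℝ, StrictMono α ∧ (∀ i, 0 < α i) ∧ (∏ i, α i) = β ∧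
      ∀ z : ℂ,
        (((∏ i, (X + C (α i))) - C (β - β₀)).map (algebraMap ℝ ℂ)).IsRoot z → z.im = 0 := by
  classical
  set c : ℝ := β - β₀ with hc
  have hc0 : 0 < c := hββ₀
  set M : ℝ := 4 + 2 ^ n * c / β with hMdef
  have hM4 : (4:ℝ) ≤ M := by
    have h : (0:ℝ) ≤ 2 ^ n * c / β := by positivity
    rw [hMdef]
    linarith
  have hM0 : (0:ℝ) < M := by linarith
  have hM1 : (1:ℝ) < M := by linarith
  have h2n : (0:ℝ) < 2 ^ n := by positivity
  have hMc : c < M * β / 2 ^ n := by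
    rw [lt_div_iff₀ h2n]
    have hMβ : M * β = 4 * β + 2 ^ n * c := by
      rw [hMdef]; field_simp
    nlinarith
  set E : ℕ := ∑ i ∈ Finset.range n, i with hE
  have hMEpos : (0:ℝ) < M ^ E := by positivity
  set t : ℝ := (β / M ^ E) ^ ((n:ℝ)⁻¹) with ht
  have ht0 : 0 < t := Real.rpow_pos_of_pos (by positivity) _
  have hn0 : (n:ℝ) ≠ 0 := by exact_mod_cast (by omega : n ≠ 0)
  have htn : t ^ n = β / M ^ E := by
    rw [ht, ← Real.rpow_natCast ((β / M ^ E) ^ ((n:ℝ)⁻¹)) n,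
      ← Real.rpow_mul (by positivity), inv_mul_cancel₀ hn0, Real.rpow_one]
  set A : ℕ → ℝ := fun j => t * M ^ j with hA
  have hA0 : ∀ j, 0 < A j := fun j => mul_pos ht0 (pow_pos hM0 _)
  have hAlt : ∀ {j j' : ℕ}, j < j' → A j < A j' := by
    intro j j' h
    exact mul_lt_mul_of_pos_left (pow_lt_pow_right₀ hM1 h) ht0
  have hAle : ∀ {j j' : ℕ}, j ≤ j' → A j ≤ A j' := by
    intro j j' h
    rcases eq_or_lt_of_le h with rfl | h
    · exact le_rfl
    · exact (hAlt h).le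
  have hAstep : ∀ {j j' : ℕ}, j < j' → M * A j ≤ A j' := by
    intro j j' h
    have : M * A j = A (j + 1) := by rw [hA]; ring
    rw [this]
    exact hAle h
  have hprod : ∏ i : Fin n, A (i : ℕ) = β := by
    have h1 : ∏ i : Fin n, A (i : ℕ) = t ^ n * M ^ E := by
      rw [hA]
      simp only
      rw [Finset.prod_mul_distrib, Finset.prod_const, Finset.card_univ, Fintype.card_fin,
        Finset.prod_pow_eq_pow_sum, Fin.sum_univ_eq_sum_range (fun i => i) n]
    rw [h1, htn, div_mul_cancel₀ _ (ne_of_gt hMEpos)]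
  clear_value A t E M c
  refine ⟨fun i => A (i : ℕ), ?_, ?_, ?_, ?_⟩
  · intro i j hij
    exact hAlt hij
  · intro i; exact hA0 _
  · exact hprod
  · -- the main part
    intro z hz
    have hz1 : (((∏ i : Fin n, (X + C (A (i:ℕ)))) - C c).map (algebraMap ℝ ℂ)).IsRoot z := hz
    set p : ℝ[X] := (∏ i : Fin n, (X + C (A (i:ℕ)))) - C c with hp
    have hev : ∀ x : ℝ, p.eval x = (∏ i : Fin n, (x + A (i:ℕ))) - c := by
      intro x
      simp only [hp, eval_sub, eval_prod, eval_add, eval_X, eval_C]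
    have hdeg : p.natDegree = n := by
      rw [hp, natDegree_sub_C,
        natDegree_prod_of_monic _ _ (fun (i : Fin n) _ => monic_X_add_C (A (i:ℕ)))]
      simp [natDegree_X_add_C]
    have hneg : ∀ j, j < n → p.eval (-(A j)) = -c := by
      intro j hj
      rw [hev]
      have h0 : (∏ i : Fin n, (-(A j) + A (i:ℕ))) = 0 :=
        Finset.prod_eq_zero (Finset.mem_univ (⟨j, hj⟩ : Fin n)) (by simp)
      rw [h0]; ring
    set R : ℝ := 2 * c * A (n-1) / β with hR
    have hR0 : 0 < R := by
      rw [hR]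
      exact div_pos (mul_pos (mul_pos two_pos hc0) (hA0 _)) hβ
    clear_value R
    set i₁ : Fin n := ⟨n-1, by omega⟩ with hi₁
    have hi₁v : ((i₁ : Fin n) : ℕ) = n - 1 := rfl
    clear_value i₁
    have hPR : 2 * c ≤ ∏ i : Fin n, (R + A (i:ℕ)) := by
      have e1 : ∏ i : Fin n, (R + A (i:ℕ))
          = (R + A ((i₁ : Fin n) : ℕ)) * ∏ i ∈ Finset.univ.erase i₁, (R + A (i:ℕ)) :=
        (Finset.mul_prod_erase Finset.univ _ (Finset.mem_univ i₁)).symm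
      have e2 : β = A ((i₁ : Fin n) : ℕ) * ∏ i ∈ Finset.univ.erase i₁, A (i:ℕ) := by
        rw [← hprod]
        exact (Finset.mul_prod_erase Finset.univ _ (Finset.mem_univ i₁)).symm
      have e3 : ∏ i ∈ Finset.univ.erase i₁, A (i:ℕ) ≤ ∏ i ∈ Finset.univ.erase i₁, (R + A (i:ℕ)) :=
        Finset.prod_le_prod (fun i _ => (hA0 _).le) (fun i _ => by linarith [hR0])
      have e4 : (0:ℝ) < ∏ i ∈ Finset.univ.erase i₁, A (i:ℕ) :=
        Finset.prod_pos (fun i _ => hA0 _)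
      have e6 : β / A ((i₁ : Fin n) : ℕ) = ∏ i ∈ Finset.univ.erase i₁, A (i:ℕ) := by
        rw [div_eq_iff (hA0 _).ne', mul_comm]
        exact e2
      have hAn : 0 < A ((i₁ : Fin n) : ℕ) := hA0 _
      calc 2 * c = R * (β / A ((i₁ : Fin n) : ℕ)) := by
            rw [hR, hi₁v]; field_simp
            rw [div_self (hA0 (n-1)).ne']
        _ = R * ∏ i ∈ Finset.univ.erase i₁, A (i:ℕ) := by rw [e6]
        _ ≤ (R + A ((i₁ : Fin n) : ℕ)) * ∏ i ∈ Finset.univ.erase i₁, (R + A (i:ℕ)) := by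
            apply mul_le_mul (by linarith) e3 e4.le (by linarith)
        _ = ∏ i : Fin n, (R + A (i:ℕ)) := e1.symm
    have hhump : ∀ j, Odd j → j < n → c < ∏ i : Fin n, (-(2 * A j) + A (i:ℕ)) := by
      intro j hjo hjn
      have hj1 : 1 ≤ j := hjo.pos
      set S : Finset (Fin n) := Finset.univ.filter (fun i : Fin n => (i:ℕ) ≤ j) with hS
      have hsubr : ∀ m ∈ Finset.range (j+1), m < n := fun m hm => by
        rw [Finset.mem_range] at hm; omega
      have hScard : S.card = j + 1 := by
        have hSeq : S = (Finset.range (j+1)).attachFin hsubr := by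
          ext i
          simp [hS, Finset.mem_attachFin, Nat.lt_succ_iff]
        rw [hSeq, Finset.card_attachFin, Finset.card_range]
      have h1 : ∏ i ∈ S, (-(2 * A j) + A (i:ℕ)) = ∏ i ∈ S, (2 * A j - A (i:ℕ)) := by
        calc ∏ i ∈ S, (-(2 * A j) + A (i:ℕ))
            = ∏ i ∈ S, ((-1) * (2 * A j - A (i:ℕ))) :=
              Finset.prod_congr rfl (fun i _ => by ring)
          _ = (-1) ^ S.card * ∏ i ∈ S, (2 * A j - A (i:ℕ)) := by
              rw [Finset.prod_mul_distrib, Finset.prod_const]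
          _ = ∏ i ∈ S, (2 * A j - A (i:ℕ)) := by
              rw [hScard, (hjo.add_one).neg_one_pow, one_mul]
      set i₀ : Fin n := ⟨0, by omega⟩ with hi₀
      set b : Fin n → ℝ := fun i => (A (i:ℕ) / 2) * (if i = i₀ then M else 1) with hb
      have hb0 : ∀ i, 0 ≤ b i := by
        intro i
        rw [hb]
        dsimp only
        have := hA0 (i:ℕ)
        split <;> nlinarith [hM0]
      have hbub : ∏ i : Fin n, b i = M * β / 2 ^ n := by
        rw [hb]
        rw [Finset.prod_mul_distrib, Finset.prod_ite_eq' Finset.univ i₀ (fun _ => M),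
          if_pos (Finset.mem_univ i₀), Finset.prod_div_distrib, Finset.prod_const,
          Finset.card_univ, Fintype.card_fin, hprod]
        ring
      have hbS : ∀ i ∈ S, b i ≤ 2 * A j - A (i:ℕ) := by
        intro i hiS
        rw [hS, Finset.mem_filter] at hiS
        have hij : (i:ℕ) ≤ j := hiS.2
        rw [hb]
        dsimp only
        split
        case isTrue h =>
          have hv : (i:ℕ) = 0 := by rw [h]
          rw [hv]
          have h2 : M * A 0 ≤ A j := hAstep (by omega)
          nlinarith [hA0 0, hA0 j, hM4]
        case isFalse h =>
          have h3 := hAle hij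
          nlinarith [hA0 (i:ℕ)]
      have hbSc : ∀ i ∈ Finset.univ.filter (fun i : Fin n => ¬ (i:ℕ) ≤ j),
          b i ≤ -(2 * A j) + A (i:ℕ) := by
        intro i hiS
        rw [Finset.mem_filter] at hiS
        have hij : j < (i:ℕ) := lt_of_not_ge hiS.2
        have hi0 : ¬ i = i₀ := by
          intro h
          rw [h] at hij
          have : ((i₀ : Fin n) : ℕ) = 0 := rfl
          omega
        rw [hb]
        dsimp only
        rw [if_neg hi0]
        have h2 : M * A j ≤ A (i:ℕ) := hAstep hij
        nlinarith [hA0 j, hA0 (i:ℕ)]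
      have hsplit := Finset.prod_filter_mul_prod_filter_not Finset.univ
        (fun i : Fin n => (i:ℕ) ≤ j) (fun i => -(2 * A j) + A (i:ℕ))
      have hposS : ∏ i ∈ S, b i ≤ ∏ i ∈ S, (2 * A j - A (i:ℕ)) :=
        Finset.prod_le_prod (fun i _ => hb0 i) hbS
      have hposSc : ∏ i ∈ Finset.univ.filter (fun i : Fin n => ¬ (i:ℕ) ≤ j), b i
          ≤ ∏ i ∈ Finset.univ.filter (fun i : Fin n => ¬ (i:ℕ) ≤ j), (-(2 * A j) + A (i:ℕ)) :=
        Finset.prod_le_prod (fun i _ => hb0 i) hbSc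
      calc c < M * β / 2 ^ n := hMc
        _ = ∏ i : Fin n, b i := hbub.symm
        _ = (∏ i ∈ S, b i) * ∏ i ∈ Finset.univ.filter (fun i : Fin n => ¬ (i:ℕ) ≤ j), b i :=
            (Finset.prod_filter_mul_prod_filter_not Finset.univ _ b).symm
        _ ≤ (∏ i ∈ S, (2 * A j - A (i:ℕ)))
            * ∏ i ∈ Finset.univ.filter (fun i : Fin n => ¬ (i:ℕ) ≤ j), (-(2 * A j) + A (i:ℕ)) := by
            apply mul_le_mul hposS hposSc (Finset.prod_nonneg (fun i _ => hb0 i))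
              (le_trans (Finset.prod_nonneg (fun i _ => hb0 i)) hposS)
        _ = (∏ i ∈ S, (-(2 * A j) + A (i:ℕ)))
            * ∏ i ∈ Finset.univ.filter (fun i : Fin n => ¬ (i:ℕ) ≤ j), (-(2 * A j) + A (i:ℕ)) := by
            rw [h1]
        _ = ∏ i : Fin n, (-(2 * A j) + A (i:ℕ)) := hsplit
    set s : ℕ → ℝ := fun k => if k = 0 then R else (if Even k then -(2 * A (k-1)) else -(A (k-1))) with hs
    have hs0 : s 0 = R := by rw [hs]; norm_num
    have hsodd : ∀ k, ¬ Even k → s k = -(A (k-1)) := by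
      intro k hk
      have hkne : k ≠ 0 := by
        rintro rfl; exact hk Even.zero
      rw [hs]; dsimp only; rw [if_neg hkne, if_neg hk]
    have hseven : ∀ k, k ≠ 0 → Even k → s k = -(2 * A (k-1)) := by
      intro k hkne hke
      rw [hs]; dsimp only; rw [if_neg hkne, if_pos hke]
    have hsignpos : ∀ k, k ≤ n → Even k → 0 < p.eval (s k) := by
      intro k hk hke
      rcases Nat.eq_zero_or_pos k with rfl | hk0
      · rw [hs0, hev]
        linarith [hPR]
      · have hkne : k ≠ 0 := by omega
        have hjodd : Odd (k-1) := by
          obtain ⟨m, rfl⟩ := hke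
          exact ⟨m-1, by omega⟩
        rw [hseven k hkne hke, hev]
        have := hhump (k-1) hjodd (by omega)
        linarith
    have hsignneg : ∀ k, k ≤ n → ¬ Even k → p.eval (s k) < 0 := by
      intro k hk hko
      have hkne : k ≠ 0 := by
        rintro rfl; exact hko Even.zero
      rw [hsodd k hko, hneg (k-1) (by omega)]
      linarith
    have hdec : ∀ k, k + 1 ≤ n → s (k+1) < s k := by
      intro k hk1
      rcases Nat.even_or_odd k with hke | hko
      · have h1 : s (k+1) = -(A k) := by
          rw [hsodd (k+1) (by simp [Nat.even_add_one, hke])]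
          norm_num
        rcases Nat.eq_zero_or_pos k with rfl | hk0
        · rw [hs0, h1]
          have := hA0 0
          linarith [hR0]
        · rw [hseven k (by omega) hke, h1]
          have h2 : M * A (k-1) ≤ A k := hAstep (by omega)
          nlinarith [hA0 (k-1), hA0 k]
      · have h1 : s (k+1) = -(2 * A k) := by
          rw [hseven (k+1) (by omega) hko.add_one]
          norm_num
        rw [hsodd k (Nat.not_even_iff_odd.mpr hko), h1]
        have h3 : A (k-1) ≤ A k := hAle (by omega)
        nlinarith [hA0 k, hA0 (k-1)]
    have hanti : ∀ k l, k ≤ l → l ≤ n → s l ≤ s k := by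
      intro k l hkl hln
      induction l with
      | zero =>
        have : k = 0 := by omega
        subst this; exact le_rfl
      | succ m ih =>
        rcases Nat.eq_or_lt_of_le hkl with rfl | h
        · exact le_rfl
        · exact le_trans (hdec m hln).le (ih (by omega) (by omega))
    have hcont : ∀ a b : ℝ, ContinuousOn (fun x => p.eval x) (Set.Icc a b) :=
      fun a b => (Polynomial.continuous p).continuousOn
    have hroot : ∀ k : Fin n, ∃ x, x ∈ Set.Ioo (s ((k:ℕ)+1)) (s (k:ℕ)) ∧ p.eval x = 0 := by
      intro k
      have hk1 : (k:ℕ) + 1 ≤ n := k.2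
      have hlt : s ((k:ℕ)+1) < s (k:ℕ) := hdec _ hk1
      rcases Nat.even_or_odd (k:ℕ) with hke | hko
      · have hfa : p.eval (s ((k:ℕ)+1)) < 0 :=
          hsignneg _ hk1 (by simp [Nat.even_add_one, hke])
        have hfb : 0 < p.eval (s (k:ℕ)) := hsignpos _ (by omega) hke
        obtain ⟨x, hx, hx0⟩ := intermediate_value_Ioo hlt.le (hcont _ _) ⟨hfa, hfb⟩
        exact ⟨x, hx, hx0⟩
      · have hfa : 0 < p.eval (s ((k:ℕ)+1)) := hsignpos _ hk1 hko.add_one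
        have hfb : p.eval (s (k:ℕ)) < 0 := hsignneg _ (by omega) (Nat.not_even_iff_odd.mpr hko)
        obtain ⟨x, hx, hx0⟩ := intermediate_value_Ioo' hlt.le (hcont _ _) ⟨hfb, hfa⟩
        exact ⟨x, hx, hx0⟩
    choose r hrmem hr0 using hroot
    have hrdec : ∀ k l : Fin n, k < l → r l < r k := by
      intro k l hkl
      have h1 : r l < s (l:ℕ) := (hrmem l).2
      have h2 : s ((k:ℕ)+1) < r k := (hrmem k).1
      have h3 : s (l:ℕ) ≤ s ((k:ℕ)+1) := hanti _ _ (by omega) (le_of_lt l.2)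
      linarith
    have hrinj : Function.Injective r := by
      intro a b hab
      rcases lt_trichotomy a b with h | h | h
      · exact absurd hab.symm (ne_of_lt (hrdec a b h))
      · exact h
      · exact absurd hab (ne_of_lt (hrdec b a h))
    have hpne : p ≠ 0 := by
      intro h0
      have h1 := hneg 0 (by omega)
      rw [h0] at h1
      simp at h1
      linarith
    have hsub : Finset.image r Finset.univ ⊆ p.roots.toFinset := by
      intro x hx
      rw [Finset.mem_image] at hx
      obtain ⟨k, _, rfl⟩ := hx
      rw [Multiset.mem_toFinset, mem_roots hpne]
      exact hr0 k
    have hcard1 : n ≤ p.roots.toFinset.card := by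
      have h1 := Finset.card_le_card hsub
      rwa [Finset.card_image_of_injective _ hrinj, Finset.card_univ, Fintype.card_fin] at h1
    have hcard2 : Multiset.card p.roots ≤ n := hdeg ▸ p.card_roots'
    have hcard3 : p.roots.toFinset.card ≤ Multiset.card p.roots := Multiset.toFinset_card_le _
    have hsplits : Splits p := splits_iff_card_roots.mpr (by rw [hdeg]; omega)
    have hmne : p.map (algebraMap ℝ ℂ) ≠ 0 := map_ne_zero hpne
    have hz2 : z ∈ (p.map (algebraMap ℝ ℂ)).roots := by
      rw [mem_roots hmne]
      exact hz1
    rw [hsplits.roots_map] at hz2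
    obtain ⟨x, -, rfl⟩ := Multiset.mem_map.mp hz2
    simp
end

section
/- Let β_1,...,β_{2(n−1)} be real numbers, let H be the 2(n−1)×2(n−1) matrix with entries H_{i,i+1} = −1 for i = 1,...,2n−3, H_{2(n−1),1} = 1, and zeros elsewhere, and let F_1 be the matrix with entries (F_1)_{i,i+1} = β_i for i = 1,...,2n−3, (F_1)_{2(n−1),1} = −β_{2(n−1)}, and zeros elsewhere. Set F = −β I + F_1 for a real scalar β. Then the characteristic polynomial of F + αH equals det(sI − F − αH) = (s+β)^{2(n−1)} + (α−β_1)(α−β_2)···(α−β_{2(n−1)}). -/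
open Polynomial Matrix


lemma key_cyclic_det (N : ℕ) (hN : 2 ≤ N) (x : ℝ) (w : Fin N → ℝ)
    (A : Matrix (Fin N) (Fin N) ℝ)
    (hA : ∀ i j, A i j =
      if (j : ℕ) = (i : ℕ) + 1 then w i
      else if i = j then x
      else if (i : ℕ) = N - 1 ∧ (j : ℕ) = 0 then -(w i) else 0) :
    A.det = x ^ N + (-1) ^ N * ∏ i, w i := by
  obtain ⟨m, rfl⟩ : ∃ m, N = m + 2 := ⟨N - 2, by omega⟩
  rw [Matrix.det_succ_column_zero]
  have h0 : A 0 0 = x := by rw [hA]; simp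
  have hlast : A (Fin.last (m + 1)) 0 = -(w (Fin.last (m + 1))) := by
    rw [hA]; simp [Fin.ext_iff]
  have hz : ∀ i : Fin (m + 2), i ≠ 0 → i ≠ Fin.last (m + 1) → A i 0 = 0 := by
    intro i h1 h2
    rw [hA]
    have hi := i.isLt
    simp only [ne_eq, Fin.ext_iff, Fin.val_zero, Fin.val_last] at h1 h2
    split_ifs with c1 c2 c3
    · exfalso; simp only [Fin.val_zero] at c1; omega
    · exfalso; rw [Fin.ext_iff] at c2; simp only [Fin.val_zero] at c2; omega
    · exfalso; simp only [Fin.val_zero] at c3; omega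
    · rfl
  have hs : (Finset.univ : Finset (Fin (m+2))).sum
      (fun i : Fin (m+2) => (-1 : ℝ) ^ (i : ℕ) * A i 0 * (A.submatrix i.succAbove Fin.succ).det)
      = ((-1 : ℝ) ^ ((0 : Fin (m+2)) : ℕ) * A 0 0 * (A.submatrix (0 : Fin (m+2)).succAbove Fin.succ).det)
        + ((-1 : ℝ) ^ ((Fin.last (m+1) : Fin (m+2)) : ℕ) * A (Fin.last (m+1)) 0
            * (A.submatrix (Fin.last (m+1)).succAbove Fin.succ).det) := by
    have hne : (0 : Fin (m+2)) ≠ Fin.last (m+1) := by simp [Fin.ext_iff]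
    have hz' : ∀ i ∈ Finset.univ, i ∉ ({0, Fin.last (m+1)} : Finset (Fin (m+2))) →
        (-1 : ℝ) ^ (i : ℕ) * A i 0 * (A.submatrix i.succAbove Fin.succ).det = 0 := by
      intro i _ hi
      simp only [Finset.mem_insert, Finset.mem_singleton, not_or] at hi
      rw [hz i hi.1 hi.2]; ring
    rw [← Finset.sum_subset (Finset.subset_univ _) hz', Finset.sum_pair hne]
  rw [hs]
  have hM0 : (A.submatrix (Fin.succAbove 0) Fin.succ).det = x ^ (m + 1) := by
    rw [Matrix.det_of_upperTriangular]
    · rw [show (∏ i : Fin (m+1), A.submatrix (Fin.succAbove 0) Fin.succ i i) = ∏ _i : Fin (m+1), x from ?_]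
      · simp
      · refine Finset.prod_congr rfl fun k _ => ?_
        simp only [Matrix.submatrix_apply, Fin.succAbove_zero]
        rw [hA]; simp
    · intro k l hlk
      have h' : (l : ℕ) < (k : ℕ) := hlk
      simp only [Matrix.submatrix_apply, Fin.succAbove_zero]
      rw [hA]
      have hk := k.isLt
      split_ifs with c1 c2 c3
      · exfalso; simp only [Fin.val_succ] at c1; omega
      · exfalso; rw [Fin.ext_iff] at c2; simp only [Fin.val_succ] at c2; omega
      · exfalso; obtain ⟨c3a, c3b⟩ := c3; simp only [Fin.val_succ] at c3b; omega
      · rfl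
  have hMl : (A.submatrix (Fin.last (m+1)).succAbove Fin.succ).det
      = ∏ k : Fin (m+1), w k.castSucc := by
    rw [Matrix.det_of_lowerTriangular]
    · refine Finset.prod_congr rfl fun k _ => ?_
      simp only [Matrix.submatrix_apply, Fin.succAbove_last]
      rw [hA]; simp
    · intro k l hkl
      have h' : (k : ℕ) < (l : ℕ) := hkl
      simp only [Matrix.submatrix_apply, Fin.succAbove_last]
      rw [hA]
      have hk := k.isLt
      split_ifs with c1 c2 c3
      · exfalso; simp only [Fin.val_succ, Fin.coe_castSucc] at c1; omega
      · exfalso; rw [Fin.ext_iff] at c2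
        simp only [Fin.val_succ, Fin.coe_castSucc] at c2; omega
      · exfalso; obtain ⟨c3a, c3b⟩ := c3
        simp only [Fin.coe_castSucc] at c3a; omega
      · rfl
  rw [h0, hlast, hM0, hMl, Fin.prod_univ_castSucc (f := w)]
  simp only [Fin.val_zero, Fin.val_last, pow_zero]
  ring
theorem stmt_3 (n : ℕ) (hn : 2 ≤ n) (β : ℝ) (βv : Fin (2 * (n - 1)) → ℝ)
    (H F₁ F : Matrix (Fin (2 * (n - 1))) (Fin (2 * (n - 1))) ℝ)
    (hH : ∀ i j, H i j =
      if (j : ℕ) = (i : ℕ) + 1 then -1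
      else if (i : ℕ) = 2 * (n - 1) - 1 ∧ (j : ℕ) = 0 then 1 else 0)
    (hF₁ : ∀ i j, F₁ i j =
      if (j : ℕ) = (i : ℕ) + 1 then βv i
      else if (i : ℕ) = 2 * (n - 1) - 1 ∧ (j : ℕ) = 0 then -(βv i) else 0)
    (hF : F = -β • (1 : Matrix (Fin (2 * (n - 1))) (Fin (2 * (n - 1))) ℝ) + F₁) :
    ∀ s α : ℝ,
      (s • (1 : Matrix (Fin (2 * (n - 1))) (Fin (2 * (n - 1))) ℝ) - F - α • H).det =
        (s + β) ^ (2 * (n - 1)) + ∏ i, (α - βv i) := by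
  intro s α
  have key := key_cyclic_det (2 * (n - 1)) (by omega) (s + β) (fun i => α - βv i)
      (s • 1 - F - α • H) ?_
  · rw [key, Even.neg_one_pow (even_two_mul _), one_mul]
  · intro i j
    have hi := i.isLt
    have hj := j.isLt
    have hn' : 2 ≤ 2 * (n - 1) := by omega
    rw [hF]
    simp only [Matrix.sub_apply, Matrix.add_apply, Matrix.smul_apply, Matrix.one_apply,
      smul_eq_mul, hH i j, hF₁ i j, Fin.ext_iff]
    split_ifs <;> first | (exfalso; omega) | ring
end

section
/- For every natural number n ≥ 1 there exist real square matrices F and H of order 2(n−1) (for n = 1, interpret this suitably, e.g. order 2) such that the set S = {α ∈ ℝ : all eigenvalues of F + αH have negative real part} is a union of at least n pairwise disjoint nonempty intervals, i.e., S has at least n connected components. -/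
open Matrix Polynomial

lemma charmatrix_blockDiagonal' {o m : Type*} [Fintype o] [DecidableEq o] [Fintype m]
    [DecidableEq m] {R : Type*} [CommRing R] (M : o → Matrix m m R) :
    charmatrix (blockDiagonal M) = blockDiagonal (fun k => charmatrix (M k)) := by
  refine Matrix.ext fun ⟨i, k⟩ ⟨j, l⟩ => ?_
  rcases eq_or_ne k l with rfl | h
  · rcases eq_or_ne i j with rfl | hij
    · simp
    · rw [charmatrix_apply_ne _ _ _ (by simp [hij])]
      simp [blockDiagonal_apply, hij]
  · rw [charmatrix_apply_ne _ _ _ (by simp [h])]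
    simp [blockDiagonal_apply, h]

lemma charpoly_blockDiagonal' {o m : Type*} [Fintype o] [DecidableEq o] [Fintype m]
    [DecidableEq m] {R : Type*} [CommRing R] (M : o → Matrix m m R) :
    (blockDiagonal M).charpoly = ∏ k, (M k).charpoly := by
  rw [Matrix.charpoly, charmatrix_blockDiagonal', det_blockDiagonal]
  rfl

lemma charpoly_two (a b : ℝ) :
    (!![-1, a; b, -1] : Matrix (Fin 2) (Fin 2) ℝ).charpoly = X^2 + 2*X + C (1 - a*b) := by
  rw [Matrix.charpoly, det_fin_two]
  simp [charmatrix_apply_eq, charmatrix_apply_ne]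
  ring

lemma stable_root (q : ℝ) (hq : 0 < q) (z : ℂ) (h : z^2 + 2*z + (q:ℂ) = 0) : z.re < 0 := by
  have hre : z.re^2 - z.im^2 + 2*z.re + q = 0 := by
    have := congrArg Complex.re h
    simpa [pow_two, Complex.add_re, Complex.mul_re, Complex.mul_im] using this
  have him : z.im * (z.re + 1) = 0 := by
    have := congrArg Complex.im h
    simp [pow_two, Complex.add_im, Complex.mul_re, Complex.mul_im] at this
    nlinarith [this]
  rcases mul_eq_zero.1 him with h0 | h1
  · rw [h0] at hre; nlinarith
  · have : z.re = -1 := by linarith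
    rw [this]; norm_num

/-- A real square matrix is Hurwitz stable if all its (complex) eigenvalues
have negative real part. -/
def IsHurwitz {N : ℕ} (M : Matrix (Fin N) (Fin N) ℝ) : Prop :=
  ∀ z : ℂ, (M.map (algebraMap ℝ ℂ)).charpoly.IsRoot z → z.re < 0

theorem stmt_4 (n : ℕ) (hn : 1 ≤ n) :
    ∃ F H : Matrix (Fin (2 * (n - 1))) (Fin (2 * (n - 1))) ℝ,
      ∃ x : Fin n → ℝ, StrictMono x ∧
        (∀ i, IsHurwitz (F + x i • H)) ∧
        ∀ i j : Fin n, i < j →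
          ∃ y : ℝ, x i < y ∧ y < x j ∧ ¬ IsHurwitz (F + y • H) := by
  classical
  set e : Fin 2 × Fin (n - 1) ≃ Fin (2 * (n - 1)) := finProdFinEquiv with he
  set bF : Fin (n - 1) → Matrix (Fin 2) (Fin 2) ℝ :=
    fun k => !![-1, -(10 * (k : ℝ) + 2); 10 * (k : ℝ) + 8, -1] with hbF
  set bH : Matrix (Fin 2) (Fin 2) ℝ := !![0, 1; -1, 0] with hbH
  set F : Matrix (Fin (2 * (n - 1))) (Fin (2 * (n - 1))) ℝ :=
    reindex e e (blockDiagonal bF) with hF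
  set H : Matrix (Fin (2 * (n - 1))) (Fin (2 * (n - 1))) ℝ :=
    reindex e e (blockDiagonal fun _ => bH) with hH
  have pencil : ∀ α : ℝ, F + α • H =
      reindex e e (blockDiagonal fun k : Fin (n - 1) =>
        !![(-1 : ℝ), α - (10 * (k : ℝ) + 2); (10 * (k : ℝ) + 8) - α, -1]) := by
    intro α
    rw [hF, hH]
    have hb : (blockDiagonal bF) + α • (blockDiagonal fun _ : Fin (n-1) => bH)
        = blockDiagonal fun k : Fin (n - 1) =>
          !![(-1 : ℝ), α - (10 * (k : ℝ) + 2); (10 * (k : ℝ) + 8) - α, -1] := by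
      have hfun : (bF + α • fun _ : Fin (n - 1) => bH) = fun k : Fin (n - 1) =>
          !![(-1 : ℝ), α - (10 * (k : ℝ) + 2); (10 * (k : ℝ) + 8) - α, -1] := by
        funext k
        refine Matrix.ext fun i j => ?_
        fin_cases i <;> fin_cases j <;>
          simp [hbF, hbH] <;> ring
      rw [← blockDiagonal_smul, ← blockDiagonal_add, hfun]
    rw [← hb]
    refine Matrix.ext fun i j => ?_
    simp [reindex_apply, submatrix_apply]
  have cp : ∀ α : ℝ, (F + α • H).charpoly =
      ∏ k : Fin (n - 1),
        (X^2 + 2*X + C (1 + (α - (10 * (k : ℝ) + 2)) * (α - (10 * (k : ℝ) + 8)))) := by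
    intro α
    rw [pencil α, charpoly_reindex, charpoly_blockDiagonal']
    refine Finset.prod_congr rfl fun k _ => ?_
    rw [charpoly_two]
    congr 1
    congr 1
    ring
  have hroot : ∀ (α : ℝ) (z : ℂ),
      ((F + α • H).map (algebraMap ℝ ℂ)).charpoly.IsRoot z ↔
        ∃ k : Fin (n - 1),
          z^2 + 2*z + ((1 + (α - (10 * (k : ℝ) + 2)) * (α - (10 * (k : ℝ) + 8)) : ℝ) : ℂ) = 0 := by
    intro α z
    rw [Matrix.charpoly_map, cp α, IsRoot.def, Polynomial.map_prod, Polynomial.eval_prod,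
      Finset.prod_eq_zero_iff]
    constructor
    · rintro ⟨k, -, hk⟩
      refine ⟨k, ?_⟩
      simpa [Polynomial.map_add, Polynomial.map_pow, Polynomial.map_mul,
        Polynomial.map_ofNat] using hk
    · rintro ⟨k, hk⟩
      refine ⟨k, Finset.mem_univ _, ?_⟩
      simpa [Polynomial.map_add, Polynomial.map_pow, Polynomial.map_mul,
        Polynomial.map_ofNat] using hk
  refine ⟨F, H, fun i => 10 * (i : ℝ), ?_, ?_, ?_⟩
  · intro i j hij
    have : (i : ℝ) < (j : ℝ) := by exact_mod_cast hij
    dsimp only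
    linarith
  · intro i
    dsimp only
    intro z hz
    rw [hroot] at hz
    obtain ⟨k, hk⟩ := hz
    refine stable_root _ ?_ z hk
    rcases le_or_gt i.val k.val with h | h
    · have h' : (i.val : ℝ) ≤ (k.val : ℝ) := by exact_mod_cast h
      nlinarith
    · have h' : (k.val : ℝ) + 1 ≤ (i.val : ℝ) := by exact_mod_cast h
      nlinarith
  · intro i j hij
    have hj : (j : ℕ) < n := j.isLt
    have hij0 : (i : ℕ) < (j : ℕ) := hij
    have hik : (i : ℕ) < n - 1 := by omega
    have hij' : (i.val : ℝ) + 1 ≤ (j.val : ℝ) := by exact_mod_cast hij0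
    refine ⟨10 * (i.val : ℝ) + 5, by dsimp only; linarith, by dsimp only; linarith, ?_⟩
    intro hHur
    have h2 : ((F + (10 * (i.val : ℝ) + 5) • H).map (algebraMap ℝ ℂ)).charpoly.IsRoot 2 := by
      rw [hroot]
      refine ⟨⟨i.val, hik⟩, ?_⟩
      rw [show ((⟨i.val, hik⟩ : Fin (n - 1)) : ℝ) = (i.val : ℝ) from rfl]
      push_cast
      ring_nf
    have := hHur 2 h2
    norm_num at this
end

section
/- Let A, B be real invertible n×n matrices. If λA^{-1} + (1−λ)B is invertible for all λ ∈ [0,1], then the product AB has no eigenvalue on the negative real axis (−∞, 0). -/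
open Matrix Polynomial

lemma eval_charpoly_aux (n : ℕ) (M : Matrix (Fin n) (Fin n) ℝ) (t : ℝ) :
    M.charpoly.eval t = (t • (1 : Matrix (Fin n) (Fin n) ℝ) - M).det := by
  rw [Matrix.charpoly, ← Polynomial.coe_evalRingHom, RingHom.map_det]
  congr 1
  ext i j
  by_cases h : i = j <;>
    simp [charmatrix, h, Matrix.one_apply, Matrix.diagonal, Matrix.scalar]

theorem stmt_8 (n : ℕ) (A B : Matrix (Fin n) (Fin n) ℝ)
    (hA : IsUnit A.det) (hB : IsUnit B.det)
    (hseg : ∀ l : ℝ, l ∈ Set.Icc (0 : ℝ) 1 → IsUnit (l • A⁻¹ + (1 - l) • B).det) :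
    ∀ t : ℝ, t < 0 → ¬ (A * B).charpoly.IsRoot t := by
  intro t ht hroot
  have h1t : (0:ℝ) < 1 - t := by linarith
  set l : ℝ := -t / (1 - t) with hl
  have hl0 : 0 ≤ l := div_nonneg (by linarith) h1t.le
  have hl1 : l ≤ 1 := by
    rw [hl, div_le_one h1t]; linarith
  have hu := hseg l ⟨hl0, hl1⟩
  have h1l : 1 - l = 1 / (1 - t) := by
    field_simp [hl]
    rw [hl, sub_mul, div_mul_cancel₀ _ h1t.ne']; ring
  have hdet0 : (t • (1 : Matrix (Fin n) (Fin n) ℝ) - A * B).det = 0 := by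
    have := hroot
    rwa [Polynomial.IsRoot, eval_charpoly_aux] at this
  have hexp : A * (l • A⁻¹ + (1 - l) • B) =
      (-(1 / (1 - t))) • (t • (1 : Matrix (Fin n) (Fin n) ℝ) - A * B) := by
    rw [Matrix.mul_add, Matrix.mul_smul, Matrix.mul_smul,
      Matrix.mul_nonsing_inv A hA, h1l, hl]
    match_scalars <;> field_simp <;> ring
  have := (hA.mul hu)
  rw [← Matrix.det_mul, hexp, Matrix.det_smul, hdet0, mul_zero] at this
  exact not_isUnit_zero this
end

section
/- Let F, H be real n×n matrices with H = bc of rank 1, (F, b) controllable, and let α_1, α_2 ∈ ℝ be such that F + α_1 H and F + α_2 H are unstable and have no eigenvalues on the imaginary axis. If 1 − Re{(α_2 − α_1) c (jωI − F − α_1 H)^{-1} b} > 0 for all ω ∈ ℝ, then for every λ ∈ (0,1) the matrix F + ((1−λ)α_1 + λα_2)H is unstable, i.e., has at least one eigenvalue with positive real part. -/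
open Matrix Polynomial

lemma myEvalCharpoly {n : ℕ} (M : Matrix (Fin n) (Fin n) ℂ) (z : ℂ) :
    M.charpoly.eval z = (z • (1 : Matrix (Fin n) (Fin n) ℂ) - M).det := by
  rw [Matrix.charpoly, ← Polynomial.coe_evalRingHom, RingHom.map_det]
  congr 1
  ext i j
  by_cases h : i = j <;>
    simp [h, charmatrix_apply, Matrix.one_apply, Matrix.diagonal_apply, Matrix.smul_apply]

lemma myDetLemma {n : ℕ} (M : Matrix (Fin n) (Fin n) ℂ) (hM : IsUnit M.det) (u v : Fin n → ℂ) :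
    (M + vecMulVec u v).det = M.det * (1 + v ⬝ᵥ (M⁻¹ *ᵥ u)) := by
  rw [vecMulVec_eq Unit, Matrix.det_add_replicateCol_mul_replicateRow hM]
  congr 1
  rw [det_unique]
  simp [Matrix.add_apply, Matrix.one_apply, Matrix.mul_apply, Matrix.replicateRow_apply, Matrix.replicateCol_apply,
    dotProduct, Matrix.mulVec, Finset.mul_sum, Finset.sum_mul]
  rw [Finset.sum_comm]
  congr 1; ext j; congr 1; ext i; ring

lemma myProdBound (r : ℝ) (hr : 0 ≤ r) (z₀ : ℂ) :
    ∀ s : Multiset ℂ, (∀ w ∈ s, r ≤ ‖z₀ - w‖) →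
      r ^ Multiset.card s ≤ (s.map (fun w => ‖z₀ - w‖)).prod := by
  refine Multiset.induction ?_ ?_
  · simp
  · intro a s ih h
    simp only [Multiset.map_cons, Multiset.prod_cons, Multiset.card_cons, pow_succ]
    have h1 := h a (Multiset.mem_cons_self a s)
    have h2 := ih fun w hw => h w (Multiset.mem_cons_of_mem hw)
    have h3 : (0:ℝ) ≤ (s.map fun w => ‖z₀ - w‖).prod :=
      Multiset.prod_nonneg (by
        intro x hx
        obtain ⟨w, _, rfl⟩ := Multiset.mem_map.mp hx
        exact norm_nonneg _)
    calc r ^ Multiset.card s * r ≤ (s.map fun w => ‖z₀ - w‖).prod * ‖z₀ - a‖ :=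
          mul_le_mul h2 h1 hr h3
      _ = ‖z₀ - a‖ * (s.map fun w => ‖z₀ - w‖).prod := mul_comm _ _

lemma myPolyLB {n : ℕ} (p : Polynomial ℂ) (hm : p.Monic) (hdeg : p.natDegree = n)
    (z₀ : ℂ) (r : ℝ) (hr : 0 ≤ r) (hroots : ∀ w ∈ p.roots, r ≤ ‖z₀ - w‖) :
    r ^ n ≤ ‖p.eval z₀‖ := by
  have hsp : p.Splits := IsAlgClosed.splits p
  have hcard : Multiset.card p.roots = n := (Polynomial.splits_iff_card_roots.mp hsp).trans hdeg
  have hp : p.eval z₀ = (p.roots.map fun w => z₀ - w).prod := by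
    conv_lhs => rw [hsp.eq_prod_roots_of_monic hm]
    rw [Polynomial.eval_multiset_prod, Multiset.map_map]
    exact congrArg _ (Multiset.map_congr rfl fun w _ => by simp)
  calc r ^ n = r ^ Multiset.card p.roots := by rw [hcard]
    _ ≤ (p.roots.map fun w => ‖z₀ - w‖).prod := myProdBound r hr z₀ _ hroots
    _ = ‖p.eval z₀‖ := by
      rw [hp]; exact ((map_multiset_prod (normHom : ℂ →*₀ ℝ) _).trans (congrArg Multiset.prod (Multiset.map_map _ _ _))).symm

lemma myRootBound {n : ℕ} (hn : n ≠ 0) (Fc Hc : Matrix (Fin n) (Fin n) ℂ) (K : ℝ) :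
    ∃ R : ℝ, ∀ s : ℝ, |s| ≤ K → ∀ z : ℂ,
      (z • (1 : Matrix (Fin n) (Fin n) ℂ) - (Fc + ((s : ℝ) : ℂ) • Hc)).det = 0 →
        ‖z‖ ≤ R := by
  haveI : Nonempty (Fin n) := ⟨⟨0, Nat.pos_of_ne_zero hn⟩⟩
  letI : NormedRing (Matrix (Fin n) (Fin n) ℂ) := Matrix.linftyOpNormedRing
  letI : NormedAlgebra ℂ (Matrix (Fin n) (Fin n) ℂ) := Matrix.linftyOpNormedAlgebra
  haveI : NormOneClass (Matrix (Fin n) (Fin n) ℂ) := Matrix.linfty_opNormOneClass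
  refine ⟨‖Fc‖ + K * ‖Hc‖, fun s hs z hz => ?_⟩
  have hmem : z ∈ spectrum ℂ (Fc + ((s : ℝ) : ℂ) • Hc) := by
    rw [spectrum.mem_iff]
    intro hunit
    rw [Matrix.isUnit_iff_isUnit_det, Algebra.algebraMap_eq_smul_one, hz] at hunit
    exact not_isUnit_zero hunit
  have hle := spectrum.norm_le_norm_of_mem hmem
  have h2 : ‖Fc + ((s : ℝ) : ℂ) • Hc‖ ≤ ‖Fc‖ + K * ‖Hc‖ := by
    refine (norm_add_le _ _).trans ?_
    have : ‖((s : ℝ) : ℂ) • Hc‖ ≤ K * ‖Hc‖ := by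
      rw [norm_smul]
      have : ‖((s : ℝ) : ℂ)‖ = |s| := by simp
      rw [this]
      exact mul_le_mul_of_nonneg_right hs (norm_nonneg _)
    linarith
  calc ‖z‖ = ‖z‖ := rfl
    _ ≤ _ := hle.trans h2

theorem stmt_10 (n : ℕ) (F H : Matrix (Fin n) (Fin n) ℝ) (b c : Fin n → ℝ)
    (hH : H = vecMulVec b c) (hrank : H.rank = 1)
    (hctrb : Submodule.span ℝ (Set.range fun k : ℕ => (F ^ k) *ᵥ b) = ⊤)
    (α₁ α₂ : ℝ)
    (hunst1 : ∃ z : ℂ, ((F + α₁ • H).map (algebraMap ℝ ℂ)).charpoly.IsRoot z ∧ 0 ≤ z.re)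
    (hunst2 : ∃ z : ℂ, ((F + α₂ • H).map (algebraMap ℝ ℂ)).charpoly.IsRoot z ∧ 0 ≤ z.re)
    (hnoim1 : ∀ z : ℂ, ((F + α₁ • H).map (algebraMap ℝ ℂ)).charpoly.IsRoot z → z.re ≠ 0)
    (hnoim2 : ∀ z : ℂ, ((F + α₂ • H).map (algebraMap ℝ ℂ)).charpoly.IsRoot z → z.re ≠ 0)
    (hfreq : ∀ ω : ℝ,
      0 < 1 - (((α₂ - α₁ : ℝ) : ℂ) * ((fun i => (c i : ℂ)) ⬝ᵥ
        (((Complex.I * ω) • (1 : Matrix (Fin n) (Fin n) ℂ) -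
          (F + α₁ • H).map (algebraMap ℝ ℂ))⁻¹ *ᵥ fun i => (b i : ℂ)))).re) :
    ∀ l : ℝ, l ∈ Set.Ioo (0 : ℝ) 1 →
      ∃ z : ℂ, ((F + ((1 - l) * α₁ + l * α₂) • H).map (algebraMap ℝ ℂ)).charpoly.IsRoot z ∧
        0 < z.re := by
  intro l hl
  -- dispose of n = 0
  rcases Nat.eq_zero_or_pos n with hn0 | hnpos
  · exfalso
    subst hn0
    obtain ⟨z, hz, -⟩ := hunst1
    simp [Matrix.charpoly, Matrix.det_isEmpty, Polynomial.IsRoot] at hz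
  -- notation
  set F' : Matrix (Fin n) (Fin n) ℂ := F.map (algebraMap ℝ ℂ) with hF'
  set H' : Matrix (Fin n) (Fin n) ℂ := H.map (algebraMap ℝ ℂ) with hH'
  set A : ℝ → Matrix (Fin n) (Fin n) ℂ :=
    fun t => F' + (((1 - t) * α₁ + t * α₂ : ℝ) : ℂ) • H' with hAdef
  have hA : ∀ t : ℝ, (F + ((1 - t) * α₁ + t * α₂) • H).map (algebraMap ℝ ℂ) = A t := by
    intro t
    ext i j
    simp only [hAdef, hF', hH', Matrix.map_apply, Matrix.add_apply, Matrix.smul_apply,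
      smul_eq_mul, map_add, _root_.map_mul, Complex.coe_algebraMap]
    push_cast
    ring
  have hA0 : (F + α₁ • H).map (algebraMap ℝ ℂ) = A 0 := by
    have e0 : (1 - (0:ℝ)) * α₁ + 0 * α₂ = α₁ := by ring
    rw [← e0, hA 0]
  have hA1 : (F + α₂ • H).map (algebraMap ℝ ℂ) = A 1 := by
    have e1 : (1 - (1:ℝ)) * α₁ + 1 * α₂ = α₂ := by ring
    rw [← e1, hA 1]
  have hroot_iff : ∀ (M : Matrix (Fin n) (Fin n) ℂ) (z : ℂ),
      M.charpoly.IsRoot z ↔ (z • (1 : Matrix (Fin n) (Fin n) ℂ) - M).det = 0 := by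
    intro M z
    rw [Polynomial.IsRoot, myEvalCharpoly]
  -- no purely imaginary roots on the whole segment
  have hL1 : ∀ t ∈ Set.Icc (0:ℝ) 1, ∀ z : ℂ, z.re = 0 →
      (z • (1 : Matrix (Fin n) (Fin n) ℂ) - A t).det ≠ 0 := by
    intro t ht z hzre hdet
    rcases eq_or_lt_of_le ht.1 with h0 | h0
    · refine hnoim1 z ?_ hzre
      rw [hA0, hroot_iff]
      rwa [← h0] at hdet
    rcases eq_or_lt_of_le ht.2 with h1 | h1
    · refine hnoim2 z ?_ hzre
      rw [hA1, hroot_iff]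
      rwa [h1] at hdet
    obtain ⟨ω, rfl⟩ : ∃ ω : ℝ, z = Complex.I * (ω : ℂ) :=
      ⟨z.im, by apply Complex.ext <;> simp [hzre]⟩
    set u : Fin n → ℂ := fun i => ((b i : ℝ) : ℂ) with hu
    set v : Fin n → ℂ := fun i => ((c i : ℝ) : ℂ) with hv
    set M : Matrix (Fin n) (Fin n) ℂ :=
      (Complex.I * (ω : ℂ)) • (1 : Matrix (Fin n) (Fin n) ℂ) - A 0 with hMdef
    have hMdet : M.det ≠ 0 := by
      intro h
      refine hnoim1 _ ?_ hzre
      rw [hA0, hroot_iff]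
      rw [hMdef] at h
      exact h
    have hMunit : IsUnit M.det := isUnit_iff_ne_zero.mpr hMdet
    have hdecomp : (Complex.I * (ω : ℂ)) • (1 : Matrix (Fin n) (Fin n) ℂ) - A t =
        M + vecMulVec ((-((t * (α₂ - α₁) : ℝ) : ℂ)) • u) v := by
      rw [hMdef, hAdef]
      ext i j
      simp only [Matrix.add_apply, Matrix.sub_apply, Matrix.smul_apply, vecMulVec_apply,
        Pi.smul_apply, smul_eq_mul, hu, hv, hH', hH, Matrix.map_apply,
        Complex.coe_algebraMap, _root_.map_mul, map_add]
      push_cast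
      ring
    rw [hdecomp, myDetLemma M hMunit _ v] at hdet
    have hfreq' := hfreq ω
    rw [hA0, ← hMdef] at hfreq'
    set G : ℂ := v ⬝ᵥ (M⁻¹ *ᵥ u) with hG
    have hdet2 : M.det * (1 + (-((t * (α₂ - α₁) : ℝ) : ℂ)) * G) = 0 := by
      rw [← hdet]
      congr 1
      rw [Matrix.mulVec_smul, dotProduct_smul, smul_eq_mul, hG]
    have hfac : (1 : ℂ) + (-((t * (α₂ - α₁) : ℝ) : ℂ)) * G = 0 :=
      (mul_eq_zero.mp hdet2).resolve_left hMdet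
    have hre := congrArg Complex.re hfac
    have hx : (((α₂ - α₁ : ℝ) : ℂ) * G).re < 1 := by linarith [hfreq']
    have hrw : ((-((t * (α₂ - α₁) : ℝ) : ℂ)) * G).re = -(t * (((α₂ - α₁ : ℝ) : ℂ) * G).re) := by
      have : (-((t * (α₂ - α₁) : ℝ) : ℂ)) * G = -(((t : ℝ) : ℂ) * (((α₂ - α₁ : ℝ) : ℂ) * G)) := by
        push_cast; ring
      rw [this, Complex.neg_re, Complex.re_ofReal_mul]
    rw [Complex.add_re, Complex.one_re, hrw] at hre
    simp only [Complex.zero_re] at hre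
    nlinarith [hre, hx, h0, h1]
  -- uniform root bound
  obtain ⟨R, hR⟩ := myRootBound hnpos.ne' F' H' (|α₁| + |α₂|)
  have hαbd : ∀ t ∈ Set.Icc (0:ℝ) 1, |(1 - t) * α₁ + t * α₂| ≤ |α₁| + |α₂| := by
    intro t ht
    have h1 : |(1 - t) * α₁ + t * α₂| ≤ |(1-t)*α₁| + |t*α₂| := abs_add_le _ _
    rw [abs_mul, abs_mul, abs_of_nonneg (by linarith [ht.2] : (0:ℝ) ≤ 1 - t),
      abs_of_nonneg ht.1] at h1
    nlinarith [abs_nonneg α₁, abs_nonneg α₂, ht.1, ht.2]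
  -- the two sets
  set T : Set ℝ := {t | t ∈ Set.Icc (0:ℝ) 1 ∧
    ∃ z : ℂ, (z • (1 : Matrix (Fin n) (Fin n) ℂ) - A t).det = 0 ∧ 0 < z.re} with hTdef
  set S : Set ℝ := {t | t ∈ Set.Icc (0:ℝ) 1 ∧
    ∀ z : ℂ, (z • (1 : Matrix (Fin n) (Fin n) ℂ) - A t).det = 0 → z.re < 0} with hSdef
  have hcover : Set.Icc (0:ℝ) 1 ⊆ S ∪ T := by
    intro t ht
    by_cases hc : ∃ z : ℂ, (z • (1 : Matrix (Fin n) (Fin n) ℂ) - A t).det = 0 ∧ 0 < z.re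
    · exact Or.inr ⟨ht, hc⟩
    · refine Or.inl ⟨ht, fun z hz => ?_⟩
      push_neg at hc
      have hne : z.re ≠ 0 := fun h => hL1 t ht z h hz
      exact lt_of_le_of_ne (not_lt.mp fun h => (hc z hz).not_gt h) hne
  have hT0 : (0:ℝ) ∈ T := by
    obtain ⟨z, hz, hzre⟩ := hunst1
    refine ⟨⟨le_refl _, zero_le_one⟩, z, ?_, ?_⟩
    · rw [← hroot_iff, ← hA0]; exact hz
    · exact lt_of_le_of_ne hzre (Ne.symm (hnoim1 z hz))
  -- joint continuity
  have hcont : Continuous fun p : ℝ × ℂ =>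
      (p.2 • (1 : Matrix (Fin n) (Fin n) ℂ) - A p.1).det := by
    apply Continuous.matrix_det
    apply continuous_matrix
    intro i j
    simp only [hAdef, Matrix.sub_apply, Matrix.smul_apply, Matrix.add_apply, smul_eq_mul]
    refine ((continuous_snd.mul continuous_const).sub
      (continuous_const.add ((Complex.continuous_ofReal.comp ?_).mul continuous_const)))
    exact ((continuous_const.sub continuous_fst).mul continuous_const).add
      (continuous_fst.mul continuous_const)
  have hTclosed : IsClosed T := by
    have hKclosed : IsClosed {p : ℝ × ℂ | p.1 ∈ Set.Icc (0:ℝ) 1 ∧ ‖p.2‖ ≤ R ∧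
        0 ≤ p.2.re ∧ (p.2 • (1 : Matrix (Fin n) (Fin n) ℂ) - A p.1).det = 0} := by
      refine IsClosed.inter (isClosed_Icc.preimage continuous_fst) ?_
      refine IsClosed.inter (isClosed_le (continuous_norm.comp continuous_snd)
        continuous_const) ?_
      exact IsClosed.inter (isClosed_le continuous_const
        (Complex.continuous_re.comp continuous_snd)) (isClosed_eq hcont continuous_const)
    have hKcompact : IsCompact {p : ℝ × ℂ | p.1 ∈ Set.Icc (0:ℝ) 1 ∧ ‖p.2‖ ≤ R ∧
        0 ≤ p.2.re ∧ (p.2 • (1 : Matrix (Fin n) (Fin n) ℂ) - A p.1).det = 0} := by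
      refine ((isCompact_Icc : IsCompact (Set.Icc (0:ℝ) 1)).prod
        (isCompact_closedBall (0:ℂ) R)).of_isClosed_subset hKclosed ?_
      rintro ⟨t, z⟩ ⟨h1, h2, -, -⟩
      refine ⟨h1, ?_⟩
      simpa [Metric.mem_closedBall, Complex.dist_eq] using h2
    have hTeq : T = Prod.fst '' {p : ℝ × ℂ | p.1 ∈ Set.Icc (0:ℝ) 1 ∧ ‖p.2‖ ≤ R ∧
        0 ≤ p.2.re ∧ (p.2 • (1 : Matrix (Fin n) (Fin n) ℂ) - A p.1).det = 0} := by
      ext t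
      constructor
      · rintro ⟨hIcc, z, hdet, hre⟩
        refine ⟨(t, z), ⟨hIcc, ?_, le_of_lt hre, hdet⟩, rfl⟩
        have hdet' := hdet
        rw [hAdef] at hdet'
        exact hR _ (hαbd t hIcc) z hdet'
      · rintro ⟨⟨t', z⟩, ⟨hIcc, -, hre0, hdet⟩, rfl⟩
        refine ⟨hIcc, z, hdet, ?_⟩
        have hne : z.re ≠ 0 := fun h => hL1 t' hIcc z h hdet
        exact lt_of_le_of_ne hre0 (Ne.symm hne)
    rw [hTeq]
    exact (hKcompact.image continuous_fst).isClosed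
  have hSclosed : IsClosed S := by
    apply isClosed_of_closure_subset
    intro t ht
    have htIcc : t ∈ Set.Icc (0:ℝ) 1 :=
      closure_minimal (fun x hx => hx.1) isClosed_Icc ht
    refine ⟨htIcc, fun z₀ hdet => ?_⟩
    by_contra hpos
    have hne : z₀.re ≠ 0 := fun h => hL1 t htIcc z₀ h hdet
    have hr : 0 < z₀.re := lt_of_le_of_ne (not_lt.mp hpos) (Ne.symm hne)
    have hest : S ⊆ {x : ℝ | z₀.re ^ n ≤
        ‖(z₀ • (1 : Matrix (Fin n) (Fin n) ℂ) - A x).det‖} := by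
      intro t' ht'
      have hmono := myPolyLB (n := n) (A t').charpoly (Matrix.charpoly_monic _)
        (by simp [Matrix.charpoly_natDegree_eq_dim]) z₀ z₀.re hr.le ?_
      · rw [myEvalCharpoly] at hmono; exact hmono
      · intro w hw
        have hwroot := Polynomial.isRoot_of_mem_roots hw
        rw [hroot_iff] at hwroot
        have hwre : w.re < 0 := ht'.2 w hwroot
        have hle := Complex.re_le_norm (z₀ - w)
        rw [Complex.sub_re] at hle
        linarith
    have hCont : Continuous fun x : ℝ =>
        ‖(z₀ • (1 : Matrix (Fin n) (Fin n) ℂ) - A x).det‖ :=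
      continuous_norm.comp (hcont.comp (continuous_id.prodMk continuous_const))
    have hle2 : z₀.re ^ n ≤ ‖(z₀ • (1 : Matrix (Fin n) (Fin n) ℂ) - A t).det‖ :=
      (isClosed_le continuous_const hCont).closure_subset ((closure_mono hest) ht)
    rw [hdet] at hle2
    simp only [norm_zero] at hle2
    nlinarith [pow_pos hr n]
  -- connectedness
  have hlT : l ∈ T := by
    by_contra hlT
    have hlIcc : l ∈ Set.Icc (0:ℝ) 1 := ⟨le_of_lt hl.1, le_of_lt hl.2⟩
    have hlS : l ∈ S := (hcover hlIcc).resolve_right hlT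
    obtain ⟨x, hx⟩ := (isPreconnected_closed_iff.mp isPreconnected_Icc) S T hSclosed hTclosed
      hcover ⟨l, hlIcc, hlS⟩ ⟨0, ⟨le_refl _, zero_le_one⟩, hT0⟩
    obtain ⟨z, hzdet, hzre⟩ := hx.2.2.2
    exact absurd hzre (not_lt.mpr (le_of_lt (hx.2.1.2 z hzdet)))
  obtain ⟨z, hzdet, hzre⟩ := hlT.2
  exact ⟨z, by rw [hA l, hroot_iff]; exact hzdet, hzre⟩
end

section
/- Let F, H be real n×n matrices and α_1, α_2 ∈ ℝ. Suppose for every λ ∈ [0,1] there exists a symmetric matrix P_λ with P_λ(F + α_λ H) + (F + α_λ H)ᵀ P_λ < 0, where α_λ = λα_1 + (1−λ)α_2, and the map λ ↦ P_λ can be chosen so that the inertia condition holds continuously (for instance P_λ = λP_1 + (1−λ)P_2 with fixed symmetric P_1, P_2). If F + α_1 H and F + α_2 H each have at least one eigenvalue with positive real part and no imaginary-axis eigenvalues, then F + α_λ H is unstable for every λ ∈ [0,1]. -/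
open Matrix Polynomial

section Aux
variable {n : ℕ}

private lemma my_eval_charpoly (M : Matrix (Fin n) (Fin n) ℂ) (z : ℂ) :
    M.charpoly.eval z = (z • (1 : Matrix (Fin n) (Fin n) ℂ) - M).det := by
  rw [Matrix.charpoly]
  rw [show (Polynomial.eval z : ℂ[X] → ℂ) = (Polynomial.evalRingHom z : ℂ[X] → ℂ) from rfl]
  rw [RingHom.map_det]
  congr 1
  ext i j
  by_cases h : i = j
  · subst h; simp [charmatrix_apply_eq, Matrix.one_apply, Matrix.smul_apply]
  · simp [charmatrix_apply_ne _ _ _ h, Matrix.one_apply_ne h, Matrix.smul_apply]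

private lemma my_prod_lower {ε : ℝ} (hε : 0 ≤ ε) :
    ∀ (s : Multiset ℂ), (∀ a ∈ s, ε ≤ ‖a‖) →
      ε ^ Multiset.card s ≤ ‖s.prod‖ := by
  intro s
  induction s using Multiset.induction with
  | empty => simp
  | cons a s ih =>
    intro h
    rw [Multiset.prod_cons, Multiset.card_cons, pow_succ, norm_mul]
    rw [mul_comm (ε ^ _) ε]
    exact mul_le_mul (h a (Multiset.mem_cons_self a s))
      (ih fun b hb => h b (Multiset.mem_cons_of_mem hb))
      (pow_nonneg hε _) (norm_nonneg _)

private lemma my_persist {q : ℂ[X]} (hq : q.Monic) {z₀ : ℂ} {ε : ℝ} (hε : 0 < ε)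
    (h : ‖q.eval z₀‖ < ε ^ q.natDegree) :
    ∃ z : ℂ, q.IsRoot z ∧ ‖z - z₀‖ < ε := by
  by_contra hc
  push_neg at hc
  have hsp := (IsAlgClosed.splits q).eq_prod_roots_of_monic hq
  have hcard : Multiset.card q.roots = q.natDegree :=
    (splits_iff_card_roots.mp (IsAlgClosed.splits q))
  have heval : q.eval z₀ = ((q.roots.map fun a => z₀ - a)).prod := by
    conv_lhs => rw [hsp]
    rw [eval_multiset_prod, Multiset.map_map]
    simp
  have hlb : ε ^ q.natDegree ≤ ‖q.eval z₀‖ := by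
    rw [heval, ← hcard, ← Multiset.card_map (fun a => z₀ - a) q.roots]
    apply my_prod_lower hε.le
    intro b hb
    obtain ⟨a, ha, rfl⟩ := Multiset.mem_map.mp hb
    have := hc a (by rw [mem_roots (hq.ne_zero)] at ha; exact ha)
    rwa [← norm_neg, neg_sub] at this
  exact absurd h (not_lt.mpr hlb)

private lemma my_noimag (A P : Matrix (Fin n) (Fin n) ℝ) (hP : P.IsSymm)
    (hL : ∀ x : Fin n → ℝ, x ≠ 0 → x ⬝ᵥ (P * A + Aᵀ * P) *ᵥ x < 0)
    {z : ℂ} (hz : (z • (1 : Matrix (Fin n) (Fin n) ℂ) - A.map (algebraMap ℝ ℂ)).det = 0) :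
    z.re ≠ 0 := by
  intro hre
  obtain ⟨v, hv, hveq⟩ := (Matrix.exists_mulVec_eq_zero_iff).mpr hz
  have heig : (A.map (algebraMap ℝ ℂ)) *ᵥ v = z • v := by
    have h := hveq
    rw [Matrix.sub_mulVec, Matrix.smul_mulVec, Matrix.one_mulVec, sub_eq_zero] at h
    exact h.symm
  set x : Fin n → ℝ := fun i => (v i).re with hx
  set y : Fin n → ℝ := fun i => (v i).im with hy
  have hAx : A *ᵥ x = (-z.im) • y := by
    funext i
    have h1 : ((A.map (algebraMap ℝ ℂ) *ᵥ v) i).re = (A *ᵥ x) i := by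
      simp only [Matrix.mulVec, dotProduct, Matrix.map_apply, Complex.re_sum]
      refine Finset.sum_congr rfl fun j _ => ?_
      simp [Complex.re_ofReal_mul, hx]
    have h2 : ((z • v) i).re = -z.im * y i := by
      simp [Complex.mul_re, hre, hy]
    rw [heig] at h1
    rw [← h1, h2, Pi.smul_apply, smul_eq_mul]
  have hAy : A *ᵥ y = z.im • x := by
    funext i
    have h1 : ((A.map (algebraMap ℝ ℂ) *ᵥ v) i).im = (A *ᵥ y) i := by
      simp only [Matrix.mulVec, dotProduct, Matrix.map_apply, Complex.im_sum]
      refine Finset.sum_congr rfl fun j _ => ?_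
      simp [Complex.im_ofReal_mul, hy]
    have h2 : ((z • v) i).im = z.im * x i := by
      simp [Complex.mul_im, hre, hx]
    rw [heig] at h1
    rw [← h1, h2, Pi.smul_apply, smul_eq_mul]
  have key : ∀ u w : Fin n → ℝ, A *ᵥ u = w →
      u ⬝ᵥ (P * A + Aᵀ * P) *ᵥ u = u ⬝ᵥ (P *ᵥ w) + w ⬝ᵥ (P *ᵥ u) := by
    intro u w hw
    rw [Matrix.add_mulVec, dotProduct_add, ← Matrix.mulVec_mulVec, ← Matrix.mulVec_mulVec,
      hw, Matrix.dotProduct_mulVec u Aᵀ, ← Matrix.mulVec_transpose, Matrix.transpose_transpose, hw]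
  have hsym : ∀ u w : Fin n → ℝ, w ⬝ᵥ (P *ᵥ u) = u ⬝ᵥ (P *ᵥ w) := by
    intro u w
    rw [Matrix.dotProduct_mulVec w P, ← Matrix.mulVec_transpose, hP.eq, dotProduct_comm]
  have hQx : x ⬝ᵥ (P * A + Aᵀ * P) *ᵥ x = -(2 * z.im * (x ⬝ᵥ (P *ᵥ y))) := by
    rw [key x ((-z.im) • y) hAx, Matrix.mulVec_smul, dotProduct_smul,
      smul_dotProduct, hsym x y]
    push_cast [smul_eq_mul]
    ring
  have hQy : y ⬝ᵥ (P * A + Aᵀ * P) *ᵥ y = 2 * z.im * (x ⬝ᵥ (P *ᵥ y)) := by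
    rw [key y (z.im • x) hAy, Matrix.mulVec_smul, dotProduct_smul,
      smul_dotProduct, hsym y x]
    push_cast [smul_eq_mul]
    ring
  have hsum : x ⬝ᵥ (P * A + Aᵀ * P) *ᵥ x + y ⬝ᵥ (P * A + Aᵀ * P) *ᵥ y = 0 := by
    rw [hQx, hQy]; ring
  by_cases hxz : x = 0
  · have hyz : y ≠ 0 := by
      intro hyz
      apply hv
      funext i
      have h1 := congrFun hxz i
      have h2 := congrFun hyz i
      exact Complex.ext (by simpa [hx] using h1) (by simpa [hy] using h2)
    have h0 : x ⬝ᵥ (P * A + Aᵀ * P) *ᵥ x = 0 := by rw [hxz]; simp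
    have := hL y hyz
    linarith [hsum]
  · have hQxneg := hL x hxz
    have hQypos : 0 < y ⬝ᵥ (P * A + Aᵀ * P) *ᵥ y := by linarith
    have hyz : y ≠ 0 := by
      intro hyz
      rw [hyz] at hQypos
      simp at hQypos
    have := hL y hyz
    linarith

private lemma my_bound (A : Matrix (Fin n) (Fin n) ℝ) {z : ℂ}
    (hz : (z • (1 : Matrix (Fin n) (Fin n) ℂ) - A.map (algebraMap ℝ ℂ)).det = 0) :
    ‖z‖ ≤ ∑ i, ∑ j, |A i j| := by
  obtain ⟨v, hv, hveq⟩ := (Matrix.exists_mulVec_eq_zero_iff).mpr hz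
  have heig : (A.map (algebraMap ℝ ℂ)) *ᵥ v = z • v := by
    have h := hveq
    rw [Matrix.sub_mulVec, Matrix.smul_mulVec, Matrix.one_mulVec, sub_eq_zero] at h
    exact h.symm
  have hne : (Finset.univ : Finset (Fin n)).Nonempty := by
    rcases Function.ne_iff.mp hv with ⟨j, -⟩
    exact ⟨j, Finset.mem_univ j⟩
  obtain ⟨i, -, hi⟩ := Finset.exists_max_image Finset.univ (fun i => ‖v i‖) hne
  have hvio : 0 < ‖v i‖ := by
    rcases Function.ne_iff.mp hv with ⟨j, hj⟩
    calc 0 < ‖v j‖ := by simpa using hj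
    _ ≤ ‖v i‖ := hi j (Finset.mem_univ j)
  have hzi : z * v i = ∑ j, (algebraMap ℝ ℂ (A i j)) * v j := by
    have := congrFun heig i
    simp only [Matrix.mulVec, dotProduct, Matrix.map_apply, Pi.smul_apply,
      smul_eq_mul] at this
    rw [← this]
  have h1 : ‖z‖ * ‖v i‖ ≤ (∑ k, ∑ j, |A k j|) * ‖v i‖ := by
    rw [← norm_mul, hzi]
    calc ‖∑ j, (algebraMap ℝ ℂ (A i j)) * v j‖
        ≤ ∑ j, ‖(algebraMap ℝ ℂ (A i j)) * v j‖ :=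
          norm_sum_le _ _
    _ = ∑ j, |A i j| * ‖v j‖ := by
          refine Finset.sum_congr rfl fun j _ => ?_
          rw [norm_mul]
          simp
    _ ≤ ∑ j, |A i j| * ‖v i‖ := by
          refine Finset.sum_le_sum fun j _ => ?_
          exact mul_le_mul_of_nonneg_left (hi j (Finset.mem_univ j)) (abs_nonneg _)
    _ = (∑ j, |A i j|) * ‖v i‖ := by rw [Finset.sum_mul]
    _ ≤ (∑ k, ∑ j, |A k j|) * ‖v i‖ := by
          apply mul_le_mul_of_nonneg_right _ hvio.le
          exact Finset.single_le_sum (fun k _ => Finset.sum_nonneg fun j _ => abs_nonneg (A k j))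
            (Finset.mem_univ i)
  exact le_of_mul_le_mul_right h1 hvio

end Aux

theorem stmt_11 (n : ℕ) (F H : Matrix (Fin n) (Fin n) ℝ) (α₁ α₂ : ℝ)
    (P₁ P₂ : Matrix (Fin n) (Fin n) ℝ) (hP₁ : P₁.IsSymm) (hP₂ : P₂.IsSymm)
    (hLyap : ∀ l : ℝ, l ∈ Set.Icc (0 : ℝ) 1 →
      ∀ x : Fin n → ℝ, x ≠ 0 →
        x ⬝ᵥ ((l • P₁ + (1 - l) • P₂) * (F + (l * α₁ + (1 - l) * α₂) • H) +
          (F + (l * α₁ + (1 - l) * α₂) • H)ᵀ * (l • P₁ + (1 - l) • P₂)) *ᵥ x < 0)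
    (hunst1 : ∃ z : ℂ, ((F + α₁ • H).map (algebraMap ℝ ℂ)).charpoly.IsRoot z ∧ 0 < z.re)
    (hunst2 : ∃ z : ℂ, ((F + α₂ • H).map (algebraMap ℝ ℂ)).charpoly.IsRoot z ∧ 0 < z.re)
    (hnoim1 : ∀ z : ℂ, ((F + α₁ • H).map (algebraMap ℝ ℂ)).charpoly.IsRoot z → z.re ≠ 0)
    (hnoim2 : ∀ z : ℂ, ((F + α₂ • H).map (algebraMap ℝ ℂ)).charpoly.IsRoot z → z.re ≠ 0) :
    ∀ l : ℝ, l ∈ Set.Icc (0 : ℝ) 1 →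
      ∃ z : ℂ, ((F + (l * α₁ + (1 - l) * α₂) • H).map (algebraMap ℝ ℂ)).charpoly.IsRoot z ∧
        0 < z.re := by
  -- basic abbreviations
  set M : ℝ → Matrix (Fin n) (Fin n) ℝ := fun l => F + (l * α₁ + (1 - l) * α₂) • H with hM
  set g : ℝ × ℂ → ℂ :=
    fun p => (p.2 • (1 : Matrix (Fin n) (Fin n) ℂ) - (M p.1).map (algebraMap ℝ ℂ)).det with hg
  -- root iff g = 0
  have hroot_iff : ∀ (l : ℝ) (z : ℂ),
      ((M l).map (algebraMap ℝ ℂ)).charpoly.IsRoot z ↔ g (l, z) = 0 := by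
    intro l z
    rw [Polynomial.IsRoot, my_eval_charpoly]
  -- continuity of g
  have hgc : Continuous g := by
    apply Continuous.matrix_det
    apply continuous_matrix
    intro i j
    simp only [Matrix.sub_apply, Matrix.smul_apply, Matrix.map_apply, Matrix.add_apply,
      smul_eq_mul, hM]
    fun_prop
  -- symmetric P
  have hPsym : ∀ l : ℝ, (l • P₁ + (1 - l) • P₂).IsSymm := fun l =>
    (hP₁.smul l).add (hP₂.smul (1 - l))
  -- no imaginary-axis roots on the segment
  have hnoim : ∀ l ∈ Set.Icc (0 : ℝ) 1, ∀ z : ℂ, g (l, z) = 0 → z.re ≠ 0 := by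
    intro l hl z hz
    exact my_noimag (M l) (l • P₁ + (1 - l) • P₂) (hPsym l) (hLyap l hl) hz
  -- uniform bound on roots
  set R : ℝ := ∑ i, ∑ j, (|F i j| + (|α₁| + |α₂|) * |H i j|) with hR
  have hbd : ∀ l ∈ Set.Icc (0 : ℝ) 1, ∀ z : ℂ, g (l, z) = 0 → ‖z‖ ≤ R := by
    intro l hl z hz
    refine (my_bound (M l) hz).trans ?_
    rw [hR]
    refine Finset.sum_le_sum fun i _ => Finset.sum_le_sum fun j _ => ?_
    simp only [hM, Matrix.add_apply, Matrix.smul_apply, smul_eq_mul]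
    calc |F i j + (l * α₁ + (1 - l) * α₂) * H i j|
        ≤ |F i j| + |l * α₁ + (1 - l) * α₂| * |H i j| := by
          refine (abs_add_le _ _).trans ?_
          rw [abs_mul]
    _ ≤ |F i j| + (|α₁| + |α₂|) * |H i j| := by
          gcongr
          calc |l * α₁ + (1 - l) * α₂| ≤ |l * α₁| + |(1 - l) * α₂| := abs_add_le _ _
          _ = |l| * |α₁| + |1 - l| * |α₂| := by rw [abs_mul, abs_mul]
          _ ≤ 1 * |α₁| + 1 * |α₂| := by
                obtain ⟨h0, h1⟩ := hl
                gcongr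
                · rw [abs_of_nonneg h0]; linarith
                · rw [abs_of_nonneg (by linarith : (0:ℝ) ≤ 1 - l)]; linarith
          _ = |α₁| + |α₂| := by ring
  -- n > 0
  obtain ⟨z₁, hz₁, hz₁re⟩ := hunst1
  have hn : 0 < n := by
    by_contra hn0
    push_neg at hn0
    have hmono := Matrix.charpoly_monic ((F + α₁ • H).map (algebraMap ℝ ℂ))
    have hdeg : ((F + α₁ • H).map (algebraMap ℝ ℂ)).charpoly.natDegree = 0 := by
      rw [Matrix.charpoly_natDegree_eq_dim, Fintype.card_fin]; omega
    have : ((F + α₁ • H).map (algebraMap ℝ ℂ)).charpoly = 1 :=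
      hmono.natDegree_eq_zero.mp hdeg
    rw [Polynomial.IsRoot, this] at hz₁
    simp at hz₁
  -- the subtype and the set s
  haveI : PreconnectedSpace (Set.Icc (0:ℝ) 1) := Subtype.preconnectedSpace isPreconnected_Icc
  set s : Set (Set.Icc (0:ℝ) 1) := {l | ∃ z : ℂ, g (↑l, z) = 0 ∧ 0 < z.re} with hs
  -- s is closed
  have hsclosed : IsClosed s := by
    set K : Set (ℝ × ℂ) := {p | p.1 ∈ Set.Icc (0:ℝ) 1 ∧ g p = 0 ∧ 0 ≤ p.2.re} with hK
    have hKclosed : IsClosed K := by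
      have : K = (Prod.fst ⁻¹' Set.Icc (0:ℝ) 1) ∩ (g ⁻¹' {0}) ∩
          ((fun p : ℝ × ℂ => p.2.re) ⁻¹' Set.Ici 0) := by
        ext p; simp [hK, and_assoc]
      rw [this]
      exact ((isClosed_Icc.preimage continuous_fst).inter
        (isClosed_singleton.preimage hgc)).inter
        (isClosed_Ici.preimage (Complex.continuous_re.comp continuous_snd))
    have hKsub : K ⊆ (Set.Icc (0:ℝ) 1) ×ˢ (Metric.closedBall (0:ℂ) R) := by
      rintro ⟨l, z⟩ ⟨hl, hz, -⟩
      refine ⟨hl, ?_⟩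
      rw [Metric.mem_closedBall, Complex.dist_eq, sub_zero]
      exact hbd l hl z hz
    have hKcomp : IsCompact K :=
      ((isCompact_Icc).prod (isCompact_closedBall (0:ℂ) R)).of_isClosed_subset hKclosed hKsub
    have hS0 : IsClosed (Prod.fst '' K) := (hKcomp.image continuous_fst).isClosed
    have hseq : s = Subtype.val ⁻¹' (Prod.fst '' K) := by
      ext l
      constructor
      · rintro ⟨z, hz, hzre⟩
        exact ⟨(↑l, z), ⟨l.2, hz, hzre.le⟩, rfl⟩
      · rintro ⟨⟨l', z⟩, ⟨hl', hz, hzre⟩, hfst⟩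
        simp only at hfst
        subst hfst
        have hne := hnoim (↑l) l.2 z hz
        exact ⟨z, hz, lt_of_le_of_ne hzre (Ne.symm hne)⟩
    rw [hseq]
    exact hS0.preimage continuous_subtype_val
  -- s is open
  have hsopen : IsOpen s := by
    rw [isOpen_iff_mem_nhds]
    rintro l₀ ⟨z₀, hz₀, hz₀re⟩
    have hU : {l : Set.Icc (0:ℝ) 1 | ‖g (↑l, z₀)‖ < z₀.re ^ n} ∈ nhds l₀ := by
      apply IsOpen.mem_nhds
      · have : Continuous fun l : Set.Icc (0:ℝ) 1 => ‖g (↑l, z₀)‖ :=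
          continuous_norm.comp (hgc.comp (continuous_subtype_val.prodMk continuous_const))
        exact isOpen_lt this continuous_const
      · simp only [Set.mem_setOf_eq, hz₀]
        simpa using pow_pos hz₀re n
    refine Filter.mem_of_superset hU ?_
    intro l hl
    have hq : ((M ↑l).map (algebraMap ℝ ℂ)).charpoly.Monic := Matrix.charpoly_monic _
    have hdeg : ((M ↑l).map (algebraMap ℝ ℂ)).charpoly.natDegree = n := by
      rw [Matrix.charpoly_natDegree_eq_dim, Fintype.card_fin]
    have hsmall : ‖((M ↑l).map (algebraMap ℝ ℂ)).charpoly.eval z₀‖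
        < z₀.re ^ ((M ↑l).map (algebraMap ℝ ℂ)).charpoly.natDegree := by
      rw [my_eval_charpoly, hdeg]
      exact hl
    obtain ⟨z, hzroot, hzclose⟩ := my_persist hq hz₀re hsmall
    refine ⟨z, (hroot_iff ↑l z).mp hzroot, ?_⟩
    have : z₀.re - z.re ≤ ‖z₀ - z‖ := by
      calc z₀.re - z.re = (z₀ - z).re := by simp
      _ ≤ ‖z₀ - z‖ := Complex.re_le_norm _
    rw [← norm_neg, neg_sub] at this
    linarith
  -- s is nonempty
  have hsne : s.Nonempty := by
    refine ⟨⟨1, by norm_num⟩, z₁, ?_, hz₁re⟩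
    rw [← hroot_iff]
    have h1 : M 1 = F + α₁ • H := by rw [hM]; norm_num
    rw [h1]
    exact hz₁
  -- conclusion
  have huniv : s = Set.univ := IsClopen.eq_univ ⟨hsclosed, hsopen⟩ hsne
  intro l hl
  have hmem : (⟨l, hl⟩ : Set.Icc (0:ℝ) 1) ∈ s := by rw [huniv]; trivial
  obtain ⟨z, hz, hzre⟩ := hmem
  exact ⟨z, (hroot_iff l z).mpr hz, hzre⟩
end

section
/- Let F = [[1, 1], [0, 1]] and H = [[0, 0], [0, 1]], α_1 = 0, α_2 = −2. Then (F + α_1 H)^{-1} + λ(α_2 − α_1)H is unstable (has an eigenvalue with positive real part) for all λ ∈ [0,1], yet the product (F + α_1 H)(F + α_2 H) has a negative real eigenvalue. -/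
open Matrix Polynomial

lemma charpoly_eval_two (R : Type*) [CommRing R] (A : Matrix (Fin 2) (Fin 2) R) (z : R) :
    A.charpoly.eval z = (z - A 0 0) * (z - A 1 1) - A 0 1 * A 1 0 := by
  simp [Matrix.charpoly, Matrix.det_fin_two, charmatrix_apply]

theorem stmt_13 :
    let F : Matrix (Fin 2) (Fin 2) ℝ := !![1, 1; 0, 1]
    let H : Matrix (Fin 2) (Fin 2) ℝ := !![0, 0; 0, 1]
    let α₁ : ℝ := 0
    let α₂ : ℝ := -2
    (∀ l : ℝ, l ∈ Set.Icc (0 : ℝ) 1 →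
        ∃ z : ℂ,
          (((F + α₁ • H)⁻¹ + (l * (α₂ - α₁)) • H).map (algebraMap ℝ ℂ)).charpoly.IsRoot z ∧
          0 < z.re) ∧
    ∃ t : ℝ, t < 0 ∧ ((F + α₁ • H) * (F + α₂ • H)).charpoly.IsRoot t := by
  intro F H α₁ α₂
  have hFinv : (F + α₁ • H)⁻¹ = !![1, -1; 0, 1] := by
    have : F + α₁ • H = !![1, 1; 0, 1] := by
      simp [F, H, α₁]
    rw [this, Matrix.inv_def, Matrix.adjugate_fin_two, Matrix.det_fin_two]
    norm_num
  constructor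
  · intro l _
    refine ⟨1, ?_, by norm_num⟩
    have hM : ((F + α₁ • H)⁻¹ + (l * (α₂ - α₁)) • H) = !![1, -1; 0, 1 - 2*l] := by
      rw [hFinv]
      ext i j
      fin_cases i <;> fin_cases j <;> simp [H, α₁, α₂] <;> ring
    rw [Polynomial.IsRoot, hM, charpoly_eval_two]
    simp
  · refine ⟨-1, by norm_num, ?_⟩
    have hP : (F + α₁ • H) * (F + α₂ • H) = !![1, 0; 0, -1] := by
      ext i j
      fin_cases i <;> fin_cases j <;>
        simp [F, H, α₁, α₂, Matrix.mul_apply, Fin.sum_univ_two] <;> norm_num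
    rw [Polynomial.IsRoot, hP, charpoly_eval_two]
    norm_num
end

section
/- Let λ_{01},...,λ_{0n} be real numbers, β_1,...,β_n real numbers, H_0 the n×n matrix with H_0(i, i+1) = 1 for i = 1,...,n−1, H_0(n,1) = −1, and zeros elsewhere, and F_0 the matrix with diagonal entries λ_{01},...,λ_{0n}, superdiagonal entries F_0(i, i+1) = β_i for i = 1,...,n−1, entry F_0(n,1) = −β_n, and zeros elsewhere. Then det(sI − F_0 − αH_0) = (s − λ_{01})···(s − λ_{0n}) + (α + β_1)(α + β_2)···(α + β_n). -/
open Matrix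

private lemma stmt_15_aux (m : ℕ) (hm : 1 ≤ m) (s α : ℝ) (lam β : Fin (m+1) → ℝ)
    (M : Matrix (Fin (m+1)) (Fin (m+1)) ℝ)
    (hM : ∀ i j : Fin (m+1), M i j =
      if (j : ℕ) = (i : ℕ) + 1 then -(β i + α)
      else if (i : ℕ) = m ∧ (j : ℕ) = 0 then (β i + α)
      else if i = j then s - lam i else 0) :
    M.det = (∏ i, (s - lam i)) + ∏ i, (α + β i) := by
  rw [Matrix.det_succ_column_zero]
  set f : Fin (m+1) → ℝ :=
    fun i => (-1 : ℝ) ^ (i : ℕ) * M i 0 * (M.submatrix i.succAbove Fin.succ).det with hf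
  have hz : ((0 : Fin (m+1)) : ℕ) = 0 := rfl
  have hl : ((Fin.last m : Fin (m+1)) : ℕ) = m := rfl
  have h0last : (0 : Fin (m+1)) ≠ Fin.last m := by
    simp [Fin.ext_iff]; omega
  have hsum : ∑ i, f i = f 0 + f (Fin.last m) := by
    rw [← Finset.sum_pair h0last]
    refine (Finset.sum_subset (Finset.subset_univ _) ?_).symm
    intro i _ hi
    simp only [Finset.mem_insert, Finset.mem_singleton, not_or] at hi
    have hi1 : ¬ ((i : ℕ) = 0) := fun h => hi.1 (Fin.ext (by simpa using h))
    have hi2 : ¬ ((i : ℕ) = m) := fun h => hi.2 (Fin.ext (by simpa using h))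
    have h1 : M i 0 = 0 := by
      rw [hM]
      rw [if_neg (by simp only [Fin.ext_iff, Fin.val_succ, Fin.coe_castSucc, Fin.val_last, Fin.val_zero, not_and] <;> omega), if_neg (by simp only [Fin.ext_iff, Fin.val_succ, Fin.coe_castSucc, Fin.val_last, Fin.val_zero, not_and] <;> omega), if_neg]
      intro h; exact hi1 (by rw [h]; rfl)
    simp [hf, h1]
  rw [hsum]
  -- f 0
  have hf0 : f 0 = ∏ i, (s - lam i) := by
    have hminor : (M.submatrix (0 : Fin (m+1)).succAbove Fin.succ).det
        = ∏ j : Fin m, (s - lam j.succ) := by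
      rw [Fin.succAbove_zero]
      rw [Matrix.det_of_upperTriangular]
      · refine Finset.prod_congr rfl fun j _ => ?_
        simp only [submatrix_apply, hM]
        rw [if_neg (by simp only [Fin.ext_iff, Fin.val_succ, Fin.coe_castSucc, Fin.val_last, Fin.val_zero, not_and] <;> omega), if_neg (by simp only [Fin.ext_iff, Fin.val_succ, Fin.coe_castSucc, Fin.val_last, Fin.val_zero, not_and] <;> omega), if_pos (by simp only [Fin.ext_iff, Fin.val_succ, Fin.coe_castSucc, Fin.val_last, Fin.val_zero, not_and] <;> omega)]
      · intro j k hjk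
        have hjk' : (k : ℕ) < (j : ℕ) := hjk
        simp only [submatrix_apply, hM]
        rw [if_neg (by simp only [Fin.ext_iff, Fin.val_succ, Fin.coe_castSucc, Fin.val_last, Fin.val_zero, not_and] <;> omega), if_neg (by simp only [Fin.ext_iff, Fin.val_succ, Fin.coe_castSucc, Fin.val_last, Fin.val_zero, not_and] <;> omega), if_neg (by simp only [Fin.ext_iff, Fin.val_succ, Fin.coe_castSucc, Fin.val_last, Fin.val_zero, not_and] <;> omega)]
    have hM00 : M 0 0 = s - lam 0 := by
      rw [hM]
      rw [if_neg (by simp only [Fin.ext_iff, Fin.val_succ, Fin.coe_castSucc, Fin.val_last, Fin.val_zero, not_and] <;> omega), if_neg (by simp only [Fin.ext_iff, Fin.val_succ, Fin.coe_castSucc, Fin.val_last, Fin.val_zero, not_and] <;> omega), if_pos (by simp only [Fin.ext_iff, Fin.val_succ, Fin.coe_castSucc, Fin.val_last, Fin.val_zero, not_and] <;> omega)]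
    rw [hf]
    simp only [hminor, hM00, Fin.val_zero, pow_zero, one_mul]
    rw [Fin.prod_univ_succ]
  -- f last
  have hflast : f (Fin.last m) = ∏ i, (α + β i) := by
    have hdiag : ∀ j : Fin m, (M.submatrix Fin.castSucc Fin.succ) j j
        = (-1) * (α + β j.castSucc) := by
      intro j
      simp only [submatrix_apply, hM]
      rw [if_pos (by simp only [Fin.ext_iff, Fin.val_succ, Fin.coe_castSucc, Fin.val_last, Fin.val_zero, not_and] <;> omega)]; ring
    have hminor : (M.submatrix (Fin.last m).succAbove Fin.succ).det
        = (-1 : ℝ) ^ m * ∏ j : Fin m, (α + β j.castSucc) := by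
      rw [Fin.succAbove_last]
      rw [Matrix.det_of_lowerTriangular]
      · rw [Finset.prod_congr rfl fun j _ => hdiag j, Finset.prod_mul_distrib,
          Finset.prod_const, Finset.card_univ, Fintype.card_fin]
      · intro j k hjk
        have hjk' : (j : ℕ) < (k : ℕ) := hjk
        have hjm : (j : ℕ) < m := j.isLt
        simp only [submatrix_apply, hM]
        rw [if_neg (by simp only [Fin.ext_iff, Fin.val_succ, Fin.coe_castSucc, Fin.val_last, Fin.val_zero, not_and] <;> omega), if_neg (by simp only [Fin.ext_iff, Fin.val_succ, Fin.coe_castSucc, Fin.val_last, Fin.val_zero, not_and] <;> omega), if_neg (by simp only [Fin.ext_iff, Fin.val_succ, Fin.coe_castSucc, Fin.val_last, Fin.val_zero, not_and] <;> omega)]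
    have hMl0 : M (Fin.last m) 0 = β (Fin.last m) + α := by
      rw [hM]
      rw [if_neg (by simp), if_pos ⟨rfl, rfl⟩]
    rw [hf]
    simp only [hminor, hMl0, Fin.val_last]
    rw [Fin.prod_univ_castSucc]
    rw [show (-1:ℝ)^m * (β (Fin.last m) + α) * ((-1:ℝ)^m * ∏ j : Fin m, (α + β j.castSucc))
      = ((-1:ℝ)^m * (-1:ℝ)^m) * ((∏ j : Fin m, (α + β j.castSucc)) * (α + β (Fin.last m))) by ring]
    rw [← pow_add, Even.neg_one_pow ⟨m, rfl⟩, one_mul]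
  rw [hf0, hflast]

theorem stmt_15 (n : ℕ) (hn : 2 ≤ n) (lam β : Fin n → ℝ)
    (H₀ F₀ : Matrix (Fin n) (Fin n) ℝ)
    (hH₀ : ∀ i j, H₀ i j =
      if (j : ℕ) = (i : ℕ) + 1 then 1
      else if (i : ℕ) = n - 1 ∧ (j : ℕ) = 0 then -1 else 0)
    (hF₀ : ∀ i j, F₀ i j =
      if (j : ℕ) = (i : ℕ) + 1 then β i
      else if (i : ℕ) = n - 1 ∧ (j : ℕ) = 0 then -(β i)
      else if i = j then lam i else 0) :
    ∀ s α : ℝ,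
      (s • (1 : Matrix (Fin n) (Fin n) ℝ) - F₀ - α • H₀).det =
        (∏ i, (s - lam i)) + ∏ i, (α + β i) := by
  intro s α
  obtain ⟨m, rfl⟩ : ∃ m, n = m + 1 := ⟨n - 1, by omega⟩
  have hm : 1 ≤ m := by omega
  refine stmt_15_aux m hm s α lam β _ ?_
  intro i j
  simp only [Matrix.sub_apply, Matrix.smul_apply, one_apply, smul_eq_mul, hF₀ i j, hH₀ i j,
    Nat.add_sub_cancel]
  split_ifs <;> (try ring) <;> exfalso <;> omega
end
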